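/- Let K, K₀ ≥ 0 and let f : [0,1] → ℝ be continuous with f ≤ 0 on [0,1], twice differentiable on a relatively open neighbourhood N in [0,1] of its zero set {t ∈ [0,1] : f(t) = 0}, and satisfying the differential inequality f″(t) ≥ −K|f′(t)| − K₀|f(t)| for all t ∈ N. If there exists t̂ ∈ [0,1) with f(t̂) = 0 and f′(t̂) = 0 (the derivative one-sided if t̂ = 0), then f ≡ 0 on [0,1]. -/

import Mathlib

open Set MeasureTheory Metric
open scoped InnerProductSpace NNReal ENNReal

noncomputable section

/-- Euclidean `n`-space. -/
abbrev Euc (n : ℕ) := EuclideanSpace ℝ (Fin n)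

/-- The Hessian of a scalar function, as a continuous linear endomorphism. -/
def hess {n : ℕ} (u : Euc n → ℝ) (x : Euc n) : Euc n →L[ℝ] Euc n :=
  fderiv ℝ (gradient u) x

/-- `C^{1,1}` regularity on a set: differentiable with locally Lipschitz derivative. -/
def C11On {n : ℕ} (f : Euc n → ℝ) (Ω : Set (Euc n)) : Prop :=
  DifferentiableOn ℝ f Ω ∧
    ∀ x ∈ Ω, ∃ s ∈ nhdsWithin x Ω, ∃ C : ℝ≥0, LipschitzOnWith C (fderiv ℝ f) s

/-- A density bounded above and below by positive constants (`f, 1/f ∈ L^∞`). -/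
def BddDensity {n : ℕ} (f : Euc n → ℝ) (Ω : Set (Euc n)) : Prop :=
  ∃ c C : ℝ, 0 < c ∧ ∀ x ∈ Ω, f x ∈ Icc c C

/-- The (Fréchet) subdifferential of `u` at `x₀`. -/
def subdiff {n : ℕ} (u : Euc n → ℝ) (x₀ : Euc n) : Set (Euc n) :=
  {p | ∀ ε > 0, ∀ᶠ x in nhds x₀, u x₀ + ⟪p, x - x₀⟫_ℝ - ε * ‖x - x₀‖ ≤ u x}

/-- The setting of a generating function `g` on a domain `Γ ⊆ ℝⁿ×ℝⁿ×ℝ`, together with the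
mappings `Y`, `Z` (defined by `g_x(x,Y,Z) = p`, `g(x,Y,Z) = u`) and the dual generating
function `g*` (defined by `g(x,y,g*(x,y,u)) = u`). -/
structure GenSetting (n : ℕ) where
  Γ : Set (Euc n × Euc n × ℝ)
  g : Euc n → Euc n → ℝ → ℝ
  Y : Euc n → ℝ → Euc n → Euc n
  Z : Euc n → ℝ → Euc n → ℝ
  gstar : Euc n → Euc n → ℝ → ℝ

namespace GenSetting

variable {n : ℕ} (S : GenSetting n)

/-- `g_x`, the gradient of `g` in the `x` variable. -/
def gx (x y : Euc n) (z : ℝ) : Euc n := gradient (fun x' => S.g x' y z) x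

/-- `g_y`, the gradient of `g` in the `y` variable. -/
def gy (x y : Euc n) (z : ℝ) : Euc n := gradient (fun y' => S.g x y' z) y

/-- `g_z`. -/
def gz (x y : Euc n) (z : ℝ) : ℝ := deriv (fun z' => S.g x y z') z

/-- `g_{xz}`. -/
def gxz (x y : Euc n) (z : ℝ) : Euc n := deriv (fun z' => S.gx x y z') z

/-- `g_{xx}`, the Hessian of `g` in `x`. -/
def gxx (x y : Euc n) (z : ℝ) : Euc n →L[ℝ] Euc n :=
  fderiv ℝ (fun x' => S.gx x' y z) x

/-- `Q = -g_y/g_z`. -/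
def Q (x y : Euc n) (z : ℝ) : Euc n := (-(S.gz x y z)⁻¹) • S.gy x y z

/-- The interval `I(x,y) = {z | (x,y,z) ∈ Γ}`. -/
def Ix (x y : Euc n) : Set ℝ := {z | (x, y, z) ∈ S.Γ}

/-- `I(Ω,y) = ⋂_{x ∈ Ω} I(x,y)`. -/
def IΩ (Ω : Set (Euc n)) (y : Euc n) : Set ℝ := ⋂ x ∈ Ω, S.Ix x y

/-- `J(x,y) = g(x,y,·)(I(x,y))`. -/
def Jxy (x y : Euc n) : Set ℝ := (S.g x y) '' S.Ix x y

/-- `J(Ω,Ω') = ⋂_{x ∈ Ω, y ∈ Ω'} J(x,y)`. -/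
def JΩ (Ω Ω' : Set (Euc n)) : Set ℝ := ⋂ x ∈ Ω, ⋂ y ∈ Ω', S.Jxy x y

/-- `J(x,Ω') = ⋂_{y ∈ Ω'} J(x,y)`. -/
def Jpt (x : Euc n) (Ω' : Set (Euc n)) : Set ℝ := ⋂ y ∈ Ω', S.Jxy x y

/-- The slice `Γ_x`. -/
def Γx (x : Euc n) : Set (Euc n × ℝ) := {yz | (x, yz.1, yz.2) ∈ S.Γ}

/-- The slice `Γ_{y,z}`. -/
def Γyz (y : Euc n) (z : ℝ) : Set (Euc n) := {x | (x, y, z) ∈ S.Γ}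

/-- The dual domain `Γ* = {(x,y,u) | u ∈ J(x,y)}`. -/
def Γstar : Set (Euc n × Euc n × ℝ) := {q | q.2.2 ∈ S.Jxy q.1 q.2.1}

/-- `P(x,y,u) = g_x(x,y,g*(x,y,u))`. -/
def Pmap (x y : Euc n) (u : ℝ) : Euc n := S.gx x y (S.gstar x y u)

/-- The matrix `E = g_{xy} - (g_z)⁻¹ g_{xz} ⊗ g_y`, as a linear map acting on
increments of `y`. -/
def Emat (x y : Euc n) (z : ℝ) : Euc n →L[ℝ] Euc n :=
  fderiv ℝ (fun y' => S.gx x y' z) y -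
    (S.gz x y z)⁻¹ • (innerSL ℝ (S.gy x y z)).smulRight (S.gxz x y z)

/-- The set `𝒰` of one-jets generated by `Γ`. -/
def Uset : Set (Euc n × ℝ × Euc n) :=
  {q | ∃ x y z, (x, y, z) ∈ S.Γ ∧ q = (x, S.g x y z, S.gx x y z)}

/-- The matrix `A(x,u,p) = g_{xx}(x,Y(x,u,p),Z(x,u,p))`. -/
def Amat (x : Euc n) (u : ℝ) (p : Euc n) : Euc n →L[ℝ] Euc n :=
  S.gxx x (S.Y x u p) (S.Z x u p)

/-- The quadratic form `A_{ij}(x,u,p) ξ_i ξ_j`. -/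
def Aform (x : Euc n) (u : ℝ) (p ξ : Euc n) : ℝ := ⟪S.Amat x u p ξ, ξ⟫_ℝ

/-- The dual matrix `A*`: the Hessian in `y` of `g*(x,·,w)`. -/
def Astar (x y : Euc n) (w : ℝ) : Euc n →L[ℝ] Euc n :=
  fderiv ℝ (fun y' => gradient (fun y'' => S.gstar x y'' w) y') y

/-- Structural conditions: `Γ` is open, `g` is `C⁴` on `Γ` with `g_z < 0`, each
`I(x,y)` is an interval, and `Y`, `Z`, `g*` satisfy their defining equations. -/
def IsGenerating : Prop :=
  IsOpen S.Γ ∧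
  ContDiffOn ℝ 4 (fun q : Euc n × Euc n × ℝ => S.g q.1 q.2.1 q.2.2) S.Γ ∧
  (∀ x y : Euc n, (S.Ix x y).OrdConnected) ∧
  (∀ q ∈ S.Γ, S.gz q.1 q.2.1 q.2.2 < 0) ∧
  (∀ q ∈ S.Γ, S.Y q.1 (S.g q.1 q.2.1 q.2.2) (S.gx q.1 q.2.1 q.2.2) = q.2.1 ∧
              S.Z q.1 (S.g q.1 q.2.1 q.2.2) (S.gx q.1 q.2.1 q.2.2) = q.2.2) ∧
  (∀ x y : Euc n, ∀ u ∈ S.Jxy x y, S.gstar x y u ∈ S.Ix x y ∧ S.g x y (S.gstar x y u) = u)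

/-- Condition A1. -/
def A1 : Prop := ∀ x : Euc n,
  InjOn (fun yz : Euc n × ℝ => (S.gx x yz.1 yz.2, S.g x yz.1 yz.2)) (S.Γx x)

/-- Condition A1*. -/
def A1star : Prop := ∀ (y : Euc n) (z : ℝ), InjOn (fun x => S.Q x y z) (S.Γyz y z)

/-- Condition A2. -/
def A2 : Prop := ∀ q ∈ S.Γ, (S.Emat q.1 q.2.1 q.2.2).toLinearMap.det ≠ 0

/-- Condition A3w: codimension-one convexity of `A` in `p`. -/
def A3w : Prop := ∀ q ∈ S.Uset, ∀ ξ η : Euc n, ⟪ξ, η⟫_ℝ = 0 →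
  0 ≤ iteratedFDeriv ℝ 2 (fun p => S.Aform q.1 q.2.1 p ξ) q.2.2 ![η, η]

/-- Condition A3: strict codimension-one convexity of `A` in `p`. -/
def A3 : Prop := ∀ q ∈ S.Uset, ∀ ξ η : Euc n, ξ ≠ 0 → η ≠ 0 → ⟪ξ, η⟫_ℝ = 0 →
  0 < iteratedFDeriv ℝ 2 (fun p => S.Aform q.1 q.2.1 p ξ) q.2.2 ![η, η]

/-- `g(·,y₀,z₀)` is a `g`-support of `u` (over `Ω`) at `x₀`. -/
def IsGSupport (Ω : Set (Euc n)) (u : Euc n → ℝ) (y₀ : Euc n) (z₀ : ℝ) (x₀ : Euc n) : Prop :=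
  z₀ ∈ S.IΩ Ω y₀ ∧ u x₀ = S.g x₀ y₀ z₀ ∧ ∀ x ∈ Ω, S.g x y₀ z₀ ≤ u x

/-- `u` is `g`-convex on `Ω`. -/
def IsGConvexOn (Ω : Set (Euc n)) (u : Euc n → ℝ) : Prop :=
  ∀ x₀ ∈ Ω, ∃ y₀ z₀, S.IsGSupport Ω u y₀ z₀ x₀

/-- `u` is strictly `g`-convex at `x₀`. -/
def IsStrictlyGConvexAt (Ω : Set (Euc n)) (u : Euc n → ℝ) (x₀ : Euc n) : Prop :=
  ∃ y₀ z₀, S.IsGSupport Ω u y₀ z₀ x₀ ∧ ∀ x ∈ Ω, x ≠ x₀ → S.g x y₀ z₀ < u x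

/-- `u` is strictly `g`-convex on `Ω`. -/
def IsStrictlyGConvexOn (Ω : Set (Euc n)) (u : Euc n → ℝ) : Prop :=
  ∀ x₀ ∈ Ω, S.IsStrictlyGConvexAt Ω u x₀

/-- The `g`-normal mapping (set-valued) of a `g`-convex function. -/
def Tset (Ω : Set (Euc n)) (u : Euc n → ℝ) (x₀ : Euc n) : Set (Euc n) :=
  {y₀ | u x₀ ∈ S.Jxy x₀ y₀ ∧ Ω ⊆ S.Γyz y₀ (S.gstar x₀ y₀ (u x₀)) ∧
        ∀ x ∈ Ω, S.g x y₀ (S.gstar x₀ y₀ (u x₀)) ≤ u x}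

/-- The image of a set under the `g`-normal mapping. -/
def TsetImage (Ω : Set (Euc n)) (u : Euc n → ℝ) (E : Set (Euc n)) : Set (Euc n) :=
  ⋃ x ∈ E, S.Tset Ω u x

/-- The (single-valued) mapping `Tu = Y(·,u,Du)` for differentiable `u`. -/
def Tpt (u : Euc n → ℝ) (x : Euc n) : Euc n := S.Y x (u x) (gradient u x)

/-- `Σ₀ = Y(x₀,u(x₀),∂u(x₀))`. -/
def Sigma0 (u : Euc n → ℝ) (x₀ : Euc n) : Set (Euc n) :=
  (fun p => S.Y x₀ (u x₀) p) '' subdiff u x₀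

/-- `u ∈ C²` is locally `g`-convex on `Ω`: its one-jet lies in `𝒰` and
`D²u - A(·,u,Du) ≥ 0`. -/
def IsLocallyGConvexOn (Ω : Set (Euc n)) (u : Euc n → ℝ) : Prop :=
  (∀ x ∈ Ω, (x, u x, gradient u x) ∈ S.Uset) ∧
  ∀ x ∈ Ω, ∀ ξ : Euc n, 0 ≤ ⟪(hess u x - S.Amat x (u x) (gradient u x)) ξ, ξ⟫_ℝ

/-- `Ω` is `g`-convex with respect to `(y₀,z₀)`. -/
def GConvexWrt (Ω : Set (Euc n)) (y₀ : Euc n) (z₀ : ℝ) : Prop :=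
  Convex ℝ ((fun x => S.Q x y₀ z₀) '' Ω)

/-- The image `Q(Γ)`. -/
def QΓ : Set (Euc n) := (fun q : Euc n × Euc n × ℝ => S.Q q.1 q.2.1 q.2.2) '' S.Γ

/-- `Ω` is sub `g`-convex with respect to `(y₀,z₀)`. -/
def SubGConvexWrt (Ω : Set (Euc n)) (y₀ : Euc n) (z₀ : ℝ) : Prop :=
  convexHull ℝ ((fun x => S.Q x y₀ z₀) '' Ω) ⊆ S.QΓ

/-- `Ω*` is `g*`-convex with respect to `(x₀,u₀)`. -/
def GstarConvexWrt (Ωs : Set (Euc n)) (x₀ : Euc n) (u₀ : ℝ) : Prop :=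
  Convex ℝ ((fun y => S.Pmap x₀ y u₀) '' Ωs)

/-- The image `P(Γ*)`. -/
def PΓstar : Set (Euc n) :=
  (fun q : Euc n × Euc n × ℝ => S.Pmap q.1 q.2.1 q.2.2) '' S.Γstar

/-- `Ω*` is sub `g*`-convex with respect to `(x₀,u₀)`. -/
def SubGstarConvexWrt (Ωs : Set (Euc n)) (x₀ : Euc n) (u₀ : ℝ) : Prop :=
  convexHull ℝ ((fun y => S.Pmap x₀ y u₀) '' Ωs) ⊆ S.PΓstar

/-- `Ω*` is `g*`-convex with respect to a function `u` on `Ω`. -/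
def GstarConvexWrtFn (Ωs Ω : Set (Euc n)) (u : Euc n → ℝ) : Prop :=
  ∀ x ∈ Ω, S.GstarConvexWrt Ωs x (u x)

/-- `Ω*` is sub `g*`-convex with respect to a function `u` on `Ω`. -/
def SubGstarConvexWrtFn (Ωs Ω : Set (Euc n)) (u : Euc n → ℝ) : Prop :=
  ∀ x ∈ Ω, S.SubGstarConvexWrt Ωs x (u x)

/-- `Ω` is sub `g`-convex in `U` with respect to `(y₀,z₀)`. -/
def SubGConvexIn (Ω U : Set (Euc n)) (y₀ : Euc n) (z₀ : ℝ) : Prop :=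
  z₀ ∈ S.IΩ U y₀ ∧
  convexHull ℝ ((fun x => S.Q x y₀ z₀) '' Ω) ⊆ (fun x => S.Q x y₀ z₀) '' U

/-- `Ω*` is sub `g*`-convex in `V` with respect to `(x₀,u₀)`. -/
def SubGstarConvexIn (Ωs V : Set (Euc n)) (x₀ : Euc n) (u₀ : ℝ) : Prop :=
  u₀ ∈ S.Jpt x₀ V ∧
  convexHull ℝ ((fun y => S.Pmap x₀ y u₀) '' Ωs) ⊆ (fun y => S.Pmap x₀ y u₀) '' V

/-- `u` is an elliptic function on `Ω`: `D²u - A(·,u,Du) > 0`. -/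
def IsEllipticOn (u : Euc n → ℝ) (Ω : Set (Euc n)) : Prop :=
  ∀ x ∈ Ω, ∀ ξ : Euc n, ξ ≠ 0 →
    0 < ⟪(hess u x - S.Amat x (u x) (gradient u x)) ξ, ξ⟫_ℝ

/-- The right-hand side `B(x,u,p) = det E(x,Y,Z) · f(x)/f*(Y(x,u,p))`. -/
def Bfn (f fstar : Euc n → ℝ) (x : Euc n) (u : ℝ) (p : Euc n) : ℝ :=
  (S.Emat x (S.Y x u p) (S.Z x u p)).toLinearMap.det * f x / fstar (S.Y x u p)

/-- `u` solves the Monge–Ampère type equation `det[D²u - A(·,u,Du)] = B(·,u,Du)` on `Ω`. -/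
def SolvesMATE (u : Euc n → ℝ) (Ω : Set (Euc n)) (B : Euc n → ℝ → Euc n → ℝ) : Prop :=
  ∀ x ∈ Ω, (hess u x - S.Amat x (u x) (gradient u x)).toLinearMap.det
    = B x (u x) (gradient u x)

/-- `u` is a generalized solution of the second boundary value problem:
`u` is `g`-convex and `μ[u] = f dx`, i.e. `∫_{Tu(E)} f* = ∫_E f` for Borel `E ⊆ Ω`
(with `f*` extended to vanish outside `Ω*`). -/
def IsGeneralizedSolution (Ω Ωs : Set (Euc n)) (u f fstar : Euc n → ℝ) : Prop :=
  S.IsGConvexOn Ω u ∧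
  ∀ E : Set (Euc n), MeasurableSet E → E ⊆ Ω →
    ∫ y in S.TsetImage Ω u E ∩ Ωs, fstar y = ∫ x in E, f x

/-- The `g`-transform `v = u*_g`, `v(y) = sup_{x ∈ Ω} g*(x,y,u(x))`. -/
def gTransform (Ω : Set (Euc n)) (u : Euc n → ℝ) (y : Euc n) : ℝ :=
  sSup ((fun x => S.gstar x y (u x)) '' Ω)

/-- Condition A5 (relative to `J₀ = (m₀,M₀)` and the constant `K₀`). -/
def A5 (Ω Ωs : Set (Euc n)) (m₀ M₀ K₀ : ℝ) : Prop :=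
  0 < K₀ ∧ K₀ < (M₀ - m₀) / (2 * diam Ω) ∧
  ∀ x ∈ closure Ω, ∀ y ∈ closure Ωs, ∀ z : ℝ, (x, y, z) ∈ S.Γ →
    S.g x y z ∈ Ioo m₀ M₀ → ‖S.gx x y z‖ ≤ K₀

/-- The compatibility condition `U × V × g*(U × V × J(U,V)) ⊆ Γ`. -/
def UVCompat (U V : Set (Euc n)) : Prop :=
  ∀ x ∈ U, ∀ y ∈ V, ∀ x' ∈ U, ∀ y' ∈ V, ∀ u ∈ S.JΩ U V, (x, y, S.gstar x' y' u) ∈ S.Γ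

/-- `v = u*_g` is an elliptic solution of the dual boundary value problem
(relative to the classical solution `u` of the original problem). -/
def IsDualEllipticSolution (Ω Ωs : Set (Euc n)) (u v f fstar : Euc n → ℝ) : Prop :=
  ContDiffOn ℝ 3 v Ωs ∧
  ∀ x ∈ Ω, ∀ y : Euc n, y = S.Tpt u x →
    (∀ ξ : Euc n, ξ ≠ 0 → 0 < ⟪(hess v y - S.Astar x y (u x)) ξ, ξ⟫_ℝ) ∧
    (hess v y - S.Astar x y (u x)).toLinearMap.det =
      (S.Emat x y (S.gstar x y (u x))).toLinearMap.det * fstar y / f x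

end GenSetting

/-! For `ε > 0` the function `v = log (ε - f)` satisfies `v'' ≤ K²/4 + K₀` wherever the
differential inequality holds, so near a point `c` with `f c = f' c = 0` comparison with the
parabola through `(c, log ε)` gives `ε - f t ≤ ε exp ((K²/4 + K₀) (t - c)² / 2)`; letting `ε → 0`
shows that `f` vanishes near `c`. Hence the points of `[0, 1]` where `f` and `f'` both vanish form
a relatively open set; it is also relatively closed because `f`, and `f'` near zeros of `f`, are
continuous, so by connectedness it is all of `[0, 1]`. -/

open Filter Topology

section SecondOrderBound

variable {D : Set ℝ}

theorem le_add_mul_sq_of_hasDerivWithinAt (hD : Convex ℝ D) {g g' g'' : ℝ → ℝ}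
    {c M : ℝ} (hg : ∀ t ∈ D, HasDerivWithinAt g (g' t) D t)
    (hg' : ∀ t ∈ D, HasDerivWithinAt g' (g'' t) D t) (hM : ∀ t ∈ interior D, g'' t ≤ M)
    (hc : c ∈ D) (hg'c : g' c = 0) :
    ∀ t ∈ D, g t ≤ g c + M / 2 * (t - c) ^ 2 := by
  let h : ℝ → ℝ := fun t => g t - M / 2 * (t - c) ^ 2
  let h' : ℝ → ℝ := fun t => g' t - M * (t - c)
  have hh : ∀ t ∈ D, HasDerivWithinAt h (h' t) D t := fun t ht =>
    ((hg t ht).sub ((((hasDerivWithinAt_id t D).sub_const c).pow 2).const_mul (M / 2))).congr_deriv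
      (by simp only [h', id]; ring)
  have hh' : ∀ t ∈ D, HasDerivWithinAt h' (g'' t - M) D t := fun t ht =>
    ((hg' t ht).sub (((hasDerivWithinAt_id t D).sub_const c).const_mul M)).congr_deriv (by ring)
  have h'_anti : AntitoneOn h' D :=
    antitoneOn_of_hasDerivWithinAt_nonpos hD (fun t ht => (hh' t ht).continuousWithinAt)
      (fun t ht => (hh' t (interior_subset ht)).mono interior_subset)
      (fun t ht => sub_nonpos.2 (hM t ht))
  have h'c : h' c = 0 := by simp [h', hg'c]
  have hcont : ContinuousOn h D := fun t ht => (hh t ht).continuousWithinAt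
  have h_mono : MonotoneOn h (D ∩ Iic c) :=
    monotoneOn_of_hasDerivWithinAt_nonneg (hD.inter (convex_Iic c))
      (hcont.mono inter_subset_left)
      (fun t ht => (hh t (interior_subset ht).1).mono (interior_subset.trans inter_subset_left))
      (fun t ht => h'c ▸ h'_anti (interior_subset ht).1 hc (interior_subset ht).2)
  have h_anti : AntitoneOn h (D ∩ Ici c) :=
    antitoneOn_of_hasDerivWithinAt_nonpos (hD.inter (convex_Ici c))
      (hcont.mono inter_subset_left)
      (fun t ht => (hh t (interior_subset ht).1).mono (interior_subset.trans inter_subset_left))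
      (fun t ht => h'c ▸ h'_anti hc (interior_subset ht).1 (interior_subset ht).2)
  intro t ht
  have hmax : h t ≤ h c := (le_total t c).elim
    (fun htc => h_mono ⟨ht, htc⟩ ⟨hc, self_mem_Iic⟩ htc)
    (fun htc => h_anti ⟨hc, self_mem_Ici⟩ ⟨ht, htc⟩ htc)
  simp only [h, sub_self] at hmax
  linarith

/-- The left-hand side is `(log (ε - f))''` at a point where `(f, f', f'') = (x, p, q)`. -/
theorem neg_mul_add_sq_div_sq_le {K K₀ ε x p q : ℝ} (hK₀ : 0 ≤ K₀) (hε : 0 < ε) (hx : x ≤ 0)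
    (hq : -K * |p| - K₀ * |x| ≤ q) :
    -(q * (ε - x) + p ^ 2) / (ε - x) ^ 2 ≤ K ^ 2 / 4 + K₀ := by
  have hy : 0 < ε - x := by linarith
  rw [abs_of_nonpos hx] at hq
  rw [div_le_iff₀ (by positivity)]
  nlinarith [sq_nonneg (K * (ε - x) / 2 - |p|), sq_abs p, mul_le_mul_of_nonneg_right hq hy.le,
    mul_nonneg (mul_nonneg hK₀ hy.le) hε.le]

variable {f f' f'' : ℝ → ℝ} {c K K₀ : ℝ}

theorem sub_le_mul_exp_of_deriv2_ge (hD : Convex ℝ D) (hK₀ : 0 ≤ K₀)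
    (hf : ∀ t ∈ D, HasDerivWithinAt f (f' t) D t)
    (hf' : ∀ t ∈ D, HasDerivWithinAt f' (f'' t) D t) (hle : ∀ t ∈ D, f t ≤ 0)
    (hineq : ∀ t ∈ interior D, -K * |f' t| - K₀ * |f t| ≤ f'' t)
    (hc : c ∈ D) (hfc : f c = 0) (hf'c : f' c = 0) {ε : ℝ} (hε : 0 < ε) :
    ∀ t ∈ D, ε - f t ≤ ε * Real.exp ((K ^ 2 / 4 + K₀) / 2 * (t - c) ^ 2) := by
  have hpos : ∀ t ∈ D, 0 < ε - f t := fun t ht => by linarith [hle t ht]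
  have hlog : ∀ t ∈ D,
      HasDerivWithinAt (fun s => Real.log (ε - f s)) (-f' t / (ε - f t)) D t := fun t ht =>
    (((hf t ht).const_sub ε).log (hpos t ht).ne').congr_deriv (by ring)
  have hlog' : ∀ t ∈ D, HasDerivWithinAt (fun s => -f' s / (ε - f s))
      (-(f'' t * (ε - f t) + f' t ^ 2) / (ε - f t) ^ 2) D t := fun t ht =>
    ((hf' t ht).neg.div ((hf t ht).const_sub ε) (hpos t ht).ne').congr_deriv
      (by simp only [Pi.neg_apply]; ring)
  intro t ht
  have hbound := le_add_mul_sq_of_hasDerivWithinAt hD hlog hlog'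
    (fun s hs => neg_mul_add_sq_div_sq_le hK₀ hε (hle s (interior_subset hs)) (hineq s hs))
    hc (by simp [hf'c]) t ht
  rw [hfc, sub_zero] at hbound
  calc ε - f t = Real.exp (Real.log (ε - f t)) := (Real.exp_log (hpos t ht)).symm
    _ ≤ Real.exp (Real.log ε + (K ^ 2 / 4 + K₀) / 2 * (t - c) ^ 2) := Real.exp_le_exp.2 hbound
    _ = ε * Real.exp ((K ^ 2 / 4 + K₀) / 2 * (t - c) ^ 2) := by
      rw [Real.exp_add, Real.exp_log hε]

theorem eqOn_zero_of_deriv2_ge (hD : Convex ℝ D) (hK₀ : 0 ≤ K₀)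
    (hf : ∀ t ∈ D, HasDerivWithinAt f (f' t) D t)
    (hf' : ∀ t ∈ D, HasDerivWithinAt f' (f'' t) D t) (hle : ∀ t ∈ D, f t ≤ 0)
    (hineq : ∀ t ∈ interior D, -K * |f' t| - K₀ * |f t| ≤ f'' t)
    (hc : c ∈ D) (hfc : f c = 0) (hf'c : f' c = 0) :
    EqOn f 0 D := by
  intro t ht
  set C := Real.exp ((K ^ 2 / 4 + K₀) / 2 * (t - c) ^ 2)
  have hlim : Tendsto (fun ε : ℝ => ε * (C - 1)) (𝓝[>] 0) (𝓝 0) :=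
    ((continuous_id.mul continuous_const).tendsto' 0 0 (zero_mul _)).mono_left
      nhdsWithin_le_nhds
  have hnonneg : -f t ≤ 0 := ge_of_tendsto hlim <| eventually_nhdsWithin_of_forall fun ε hε => by
    linarith [sub_le_mul_exp_of_deriv2_ge hD hK₀ hf hf' hle hineq hc hfc hf'c hε t ht]
  exact le_antisymm (hle t ht) (neg_nonpos.1 hnonneg)

end SecondOrderBound

theorem eventuallyEq_zero_of_deriv2_ge {s : Set ℝ} (hs : Convex ℝ s) {f f' f'' : ℝ → ℝ}
    {p K K₀ : ℝ} (hK₀ : 0 ≤ K₀)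
    (h : ∀ᶠ t in 𝓝[s] p, HasDerivWithinAt f (f' t) s t ∧ HasDerivWithinAt f' (f'' t) s t ∧
      f t ≤ 0 ∧ -K * |f' t| - K₀ * |f t| ≤ f'' t)
    (hp : p ∈ s) (hfp : f p = 0) (hf'p : f' p = 0) :
    f =ᶠ[𝓝[s] p] 0 := by
  obtain ⟨δ, hδ, hball⟩ := Metric.mem_nhdsWithin_iff.1 h
  have hP : ∀ t ∈ s ∩ ball p δ, _ := fun t ht => hball ⟨ht.2, ht.1⟩
  exact mem_of_superset (inter_mem_nhdsWithin s (ball_mem_nhds p hδ)) <|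
    eqOn_zero_of_deriv2_ge (hs.inter (convex_ball p δ)) hK₀
      (fun t ht => (hP t ht).1.mono inter_subset_left)
      (fun t ht => (hP t ht).2.1.mono inter_subset_left) (fun t ht => (hP t ht).2.2.1)
      (fun t ht => (hP t (interior_subset ht)).2.2.2) ⟨hp, mem_ball_self hδ⟩ hfp hf'p

theorem eventually_eq_zero_and_derivWithin_eq_zero {s : Set ℝ} {f : ℝ → ℝ} {p : ℝ}
    (h : f =ᶠ[𝓝[s] p] 0) : ∀ᶠ q in 𝓝[s] p, f q = 0 ∧ derivWithin f s q = 0 := by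
  have h' : ∀ᶠ q in 𝓝[s] p, f =ᶠ[𝓝[s] q] 0 := eventually_eventually_nhdsWithin.2 h
  filter_upwards [h, h'] with q hq hq'
  exact ⟨hq, (hq'.derivWithin_eq hq).trans (by simp)⟩

theorem one_dim_strong_maximum_principle_general
    (K K₀ : ℝ) (hK₀ : 0 ≤ K₀) (f : ℝ → ℝ)
    (hfc : ContinuousOn f (Icc 0 1))
    (hle : ∀ t ∈ Icc (0:ℝ) 1, f t ≤ 0)
    (N : Set ℝ)
    (hNopen : ∃ O : Set ℝ, IsOpen O ∧ N = O ∩ Icc 0 1)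
    (hNzero : {t ∈ Icc (0:ℝ) 1 | f t = 0} ⊆ N)
    (hdiff : ∀ t ∈ N, DifferentiableWithinAt ℝ f (Icc 0 1) t ∧
      DifferentiableWithinAt ℝ (derivWithin f (Icc 0 1)) (Icc 0 1) t)
    (hineq : ∀ t ∈ N,
      -K * |derivWithin f (Icc 0 1) t| - K₀ * |f t| ≤
        derivWithin (derivWithin f (Icc 0 1)) (Icc 0 1) t)
    (that : ℝ) (hthat : that ∈ Ico (0:ℝ) 1)
    (hf0 : f that = 0) (hf'0 : derivWithin f (Icc 0 1) that = 0) :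
    ∀ t ∈ Icc (0:ℝ) 1, f t = 0 := by
  obtain ⟨O, hO, rfl⟩ := hNopen
  set D := derivWithin f (Icc 0 1)
  let Z : ℝ → Prop := fun t => f t = 0 ∧ D t = 0
  have hZ_open : ∀ p ∈ Icc (0:ℝ) 1, ∀ᶠ q in 𝓝[Icc 0 1] p, Z p → Z q := by
    intro p hp
    by_cases hZp : Z p
    · have hf_zero : f =ᶠ[𝓝[Icc 0 1] p] 0 := by
        refine eventuallyEq_zero_of_deriv2_ge (K := K) (f'' := derivWithin D (Icc 0 1))
          (convex_Icc 0 1) hK₀ ?_ hp hZp.1 hZp.2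
        filter_upwards [inter_mem_nhdsWithin _ (hO.mem_nhds (hNzero ⟨hp, hZp.1⟩).1)]
          with t ⟨htI, htO⟩
        exact ⟨(hdiff t ⟨htO, htI⟩).1.hasDerivWithinAt, (hdiff t ⟨htO, htI⟩).2.hasDerivWithinAt,
          hle t htI, hineq t ⟨htO, htI⟩⟩
      filter_upwards [eventually_eq_zero_and_derivWithin_eq_zero hf_zero] with q hq _ using hq
    · exact .of_forall fun _ h => absurd h hZp
  have hZ_closed : ∀ p ∈ Icc (0:ℝ) 1, ∀ᶠ q in 𝓝[Icc 0 1] p, Z q → Z p := by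
    intro p hp
    by_cases hfp : f p = 0
    · by_cases hDp : D p = 0
      · exact .of_forall fun _ _ => ⟨hfp, hDp⟩
      filter_upwards [(hdiff p (hNzero ⟨hp, hfp⟩)).2.continuousWithinAt.eventually_ne hDp]
        with q hq hZq using absurd hZq.2 hq
    · filter_upwards [(hfc p hp).eventually_ne hfp] with q hq hZq using absurd hZq.1 hq
  intro t ht
  exact (isPreconnected_Icc.induction₂' (fun p q => Z p → Z q)
    (fun p hp => (hZ_open p hp).and (hZ_closed p hp)) (fun _ _ _ _ _ _ hpq hqr => hqr ∘ hpq)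
    (Ico_subset_Icc_self hthat) ht ⟨hf0, hf'0⟩).1

/-- The one-dimensional strong maximum principle for the differential inequality
`f'' ≥ -K|f'| - K₀|f|`: a nonpositive function vanishing to first order at a point
of `[0,1)` vanishes identically on `[0,1]`. -/
theorem one_dim_strong_maximum_principle
    (K K₀ : ℝ) (hK : 0 ≤ K) (hK₀ : 0 ≤ K₀) (f : ℝ → ℝ)
    (hfc : ContinuousOn f (Icc 0 1))
    (hle : ∀ t ∈ Icc (0:ℝ) 1, f t ≤ 0)
    (N : Set ℝ)
    (hNopen : ∃ O : Set ℝ, IsOpen O ∧ N = O ∩ Icc 0 1)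
    (hNzero : {t ∈ Icc (0:ℝ) 1 | f t = 0} ⊆ N)
    (hdiff : ∀ t ∈ N, DifferentiableWithinAt ℝ f (Icc 0 1) t ∧
      DifferentiableWithinAt ℝ (derivWithin f (Icc 0 1)) (Icc 0 1) t)
    (hineq : ∀ t ∈ N,
      -K * |derivWithin f (Icc 0 1) t| - K₀ * |f t| ≤
        derivWithin (derivWithin f (Icc 0 1)) (Icc 0 1) t)
    (that : ℝ) (hthat : that ∈ Ico (0:ℝ) 1)
    (hf0 : f that = 0) (hf'0 : derivWithin f (Icc 0 1) that = 0) :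
    ∀ t ∈ Icc (0:ℝ) 1, f t = 0 :=
  one_dim_strong_maximum_principle_general K K₀ hK₀ f hfc hle N hNopen hNzero hdiff hineq that hthat
    hf0 hf'0
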